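/- If L is an n-bow, then the vertices of Γ(L) are exactly the cyclic triples (I, [n−1]∖I, {n}), where I ranges over the nonempty proper subsets of [n−1]; moreover, distinct such subsets I give distinct vertices. -/

import Mathlib

open Finset

/-- `I ⊆ [n]` is *short*: the sum of its lengths is less than that of its complement. -/
def ShortSet {n : ℕ} (L : Fin n → ℝ) (I : Finset (Fin n)) : Prop :=
  ∑ i ∈ I, L i < ∑ i ∈ Iᶜ, L i

/-- `I ⊆ [n]` is *long*: the sum of its lengths is greater than that of its complement. -/
def LongSet {n : ℕ} (L : Fin n → ℝ) (I : Finset (Fin n)) : Prop :=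
  ∑ i ∈ Iᶜ, L i < ∑ i ∈ I, L i

/-- The length vector `L` is *generic*. -/
def GenericVec {n : ℕ} (L : Fin n → ℝ) : Prop :=
  ∀ I : Finset (Fin n), ∑ i ∈ I, L i ≠ ∑ i ∈ Iᶜ, L i

/-- `L` satisfies the triangle inequality: every singleton is short. -/
def TriangleIneq {n : ℕ} (L : Fin n → ℝ) : Prop :=
  ∀ i : Fin n, ShortSet L {i}

/-- Ordered triples of subsets of `[n]`. -/
abbrev LTriple (n : ℕ) := Finset (Fin n) × Finset (Fin n) × Finset (Fin n)

/-- An ordered triple `(I, J, K)` representing a vertex of `Γ(L)`: three pairwise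
disjoint nonempty short sets whose union is `[n]`. -/
def IsVertex {n : ℕ} (L : Fin n → ℝ) (V : LTriple n) : Prop :=
  V.1.Nonempty ∧ V.2.1.Nonempty ∧ V.2.2.Nonempty ∧
  ShortSet L V.1 ∧ ShortSet L V.2.1 ∧ ShortSet L V.2.2 ∧
  Disjoint V.1 V.2.1 ∧ Disjoint V.1 V.2.2 ∧ Disjoint V.2.1 V.2.2 ∧
  V.1 ∪ V.2.1 ∪ V.2.2 = Finset.univ

/-- Cyclic rotation of an ordered triple. -/
def rotT {n : ℕ} (V : LTriple n) : LTriple n := (V.2.1, V.2.2, V.1)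

/-- Two ordered triples represent the same cyclically ordered partition
(`(I,J,K)`, `(J,K,I)` and `(K,I,J)` are identified). -/
def CyclEq {n : ℕ} (V W : LTriple n) : Prop :=
  W = V ∨ W = rotT V ∨ W = rotT (rotT V)

/-- The mirror image of the vertex `(I, J, K)` is the vertex `(J, I, K)`. -/
def mirrorT {n : ℕ} (V : LTriple n) : LTriple n := (V.2.1, V.1, V.2.2)

/-- The elementary move on representatives: shift a nonempty proper subset
`S ⊊ I` to the second part, provided `J ∪ S` stays short. -/
def MoveStep {n : ℕ} (L : Fin n → ℝ) (V W : LTriple n) : Prop :=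
  ∃ S : Finset (Fin n), S.Nonempty ∧ S ⊂ V.1 ∧ ShortSet L (V.2.1 ∪ S) ∧
    W = (V.1 \ S, V.2.1 ∪ S, V.2.2)

/-- Adjacency in `Γ(L)`: one of the two vertices has a representative from which an
elementary move leads to a representative of the other. -/
def GammaAdj {n : ℕ} (L : Fin n → ℝ) (V W : LTriple n) : Prop :=
  (∃ V' W' : LTriple n, CyclEq V V' ∧ MoveStep L V' W' ∧ CyclEq W W') ∨
  (∃ W' V' : LTriple n, CyclEq W W' ∧ MoveStep L W' V' ∧ CyclEq V V')

/-- There is a path of length `m` (i.e. with `m` consecutive edges) in `Γ(L)`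
from the vertex `V` to the vertex `W`. -/
def GammaPath {n : ℕ} (L : Fin n → ℝ) (m : ℕ) (V W : LTriple n) : Prop :=
  ∃ f : ℕ → LTriple n, CyclEq V (f 0) ∧ CyclEq W (f m) ∧
    (∀ i ≤ m, IsVertex L (f i)) ∧ ∀ i < m, GammaAdj L (f i) (f (i + 1))

/-!
In an `n`-bow every pair `{i, n}` is long, so a short set containing `n` is `{n}` itself, while
every set avoiding `n` and some `i ≠ n` lies in the short complement of `{i, n}`. Hence in a
vertex the part containing `n` is `{n}`, the other two parts split `[n−1]`, and conversely every
such split is a vertex.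
-/

section ShortLong

variable {n : ℕ} {L : Fin n → ℝ} {I J : Finset (Fin n)}

theorem ShortSet.not_longSet (h : ShortSet L I) : ¬LongSet L I :=
  lt_asymm h

theorem longSet_iff_shortSet_compl : LongSet L I ↔ ShortSet L Iᶜ := by
  simp only [LongSet, ShortSet, compl_compl]

theorem ShortSet.mono (hL : ∀ i, 0 ≤ L i) (hIJ : I ⊆ J) (hJ : ShortSet L J) :
    ShortSet L I :=
  calc ∑ i ∈ I, L i ≤ ∑ i ∈ J, L i := sum_le_sum_of_subset_of_nonneg hIJ fun i _ _ => hL i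
    _ < ∑ i ∈ Jᶜ, L i := hJ
    _ ≤ ∑ i ∈ Iᶜ, L i :=
      sum_le_sum_of_subset_of_nonneg (compl_subset_compl.2 hIJ) fun i _ _ => hL i

theorem LongSet.mono (hL : ∀ i, 0 ≤ L i) (hIJ : I ⊆ J) (hI : LongSet L I) : LongSet L J := by
  rw [longSet_iff_shortSet_compl] at hI ⊢
  exact hI.mono hL (compl_subset_compl.2 hIJ)

end ShortLong

section Vertex

variable {n : ℕ} {L : Fin n → ℝ} {V W : LTriple n}

theorem IsVertex.rotT (h : IsVertex L V) : IsVertex L (rotT V) := by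
  obtain ⟨h₁, h₂, h₃, s₁, s₂, s₃, d₁₂, d₁₃, d₂₃, hu⟩ := h
  refine ⟨h₂, h₃, h₁, s₂, s₃, s₁, d₂₃, d₁₂.symm, d₁₃.symm, ?_⟩
  show V.2.1 ∪ V.2.2 ∪ V.1 = univ
  rw [← hu]
  ac_rfl

theorem isVertex_rotT_iff : IsVertex L (rotT V) ↔ IsVertex L V :=
  ⟨fun h => h.rotT.rotT, IsVertex.rotT⟩

theorem CyclEq.isVertex_iff (h : CyclEq V W) : IsVertex L V ↔ IsVertex L W := by
  rcases h with rfl | rfl | rfl <;> simp only [isVertex_rotT_iff]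

theorem CyclEq.eq_of_mem_third {ν : Fin n} (h : CyclEq V W) (hV : ν ∈ V.2.2)
    (hW₁ : ν ∉ W.1) (hW₂ : ν ∉ W.2.1) : W = V := by
  rcases h with rfl | rfl | rfl
  · rfl
  · exact absurd hV hW₂
  · exact absurd hV hW₁

theorem exists_cyclEq_mem_third (hV : V.1 ∪ V.2.1 ∪ V.2.2 = univ) (ν : Fin n) :
    ∃ W, CyclEq V W ∧ ν ∈ W.2.2 := by
  have hν : ν ∈ V.1 ∪ V.2.1 ∪ V.2.2 := hV ▸ mem_univ ν
  simp only [mem_union] at hν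
  rcases hν with (h | h) | h
  · exact ⟨rotT V, Or.inr (Or.inl rfl), h⟩
  · exact ⟨rotT (rotT V), Or.inr (Or.inr rfl), h⟩
  · exact ⟨V, Or.inl rfl, h⟩

theorem IsVertex.ssubset_erase_of_third_eq_singleton {A B : Finset (Fin n)} {ν : Fin n}
    (h : IsVertex L (A, B, {ν})) : A ⊂ univ.erase ν ∧ B = univ.erase ν \ A := by
  obtain ⟨-, hB, -, -, -, -, (hAB : Disjoint A B), (hAν : Disjoint A {ν}),
    (hBν : Disjoint B {ν}), hu⟩ := h
  have hsplit : B ∪ A = univ.erase ν := by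
    rw [← hu, union_comm A, union_singleton, erase_insert]
    exact fun hν => (mem_union.1 hν).elim
      (disjoint_singleton_right.1 hBν) (disjoint_singleton_right.1 hAν)
  rw [← hsplit, union_sdiff_cancel_right hAB.symm]
  exact ⟨hAB.symm.right_lt_sup_of_left_ne_bot hB.ne_empty, rfl⟩

theorem eq_of_cyclEq_of_subset_erase {ν : Fin n} {I I' : Finset (Fin n)}
    (hI' : I' ⊆ univ.erase ν)
    (h : CyclEq (I, univ.erase ν \ I, {ν}) (I', univ.erase ν \ I', {ν})) : I = I' := by
  have hνI' : ν ∉ I' := fun hν => notMem_erase ν univ (hI' hν)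
  have hνI'c : ν ∉ univ.erase ν \ I' := fun hν => notMem_erase ν univ (mem_sdiff.1 hν).1
  exact (congrArg Prod.fst (h.eq_of_mem_third (mem_singleton_self ν) hνI' hνI'c)).symm

end Vertex

section Bow

variable {n : ℕ} {L : Fin n → ℝ} {ν : Fin n} {I C : Finset (Fin n)}
  (hL : ∀ i, 0 ≤ L i) (hbow : ∀ i, i ≠ ν → LongSet L {i, ν})
include hL hbow

theorem shortSet_of_ssubset_erase (hI : I ⊂ univ.erase ν) : ShortSet L I := by
  obtain ⟨i, hi, hiI⟩ := exists_of_ssubset hI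
  refine (longSet_iff_shortSet_compl.1 (hbow i (ne_of_mem_erase hi))).mono hL fun x hx => ?_
  have hxν : x ≠ ν := ne_of_mem_erase (hI.subset hx)
  simp only [mem_compl, mem_insert, mem_singleton]
  rintro (rfl | rfl)
  exacts [hiI hx, hxν rfl]

theorem eq_singleton_of_shortSet_of_mem (hC : ShortSet L C) (hνC : ν ∈ C) : C = {ν} := by
  refine eq_singleton_iff_unique_mem.2 ⟨hνC, fun i hi => ?_⟩
  by_contra hiν
  exact hC.not_longSet ((hbow i hiν).mono hL (insert_subset hi (singleton_subset_iff.2 hνC)))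

theorem isVertex_of_ssubset_erase (hν : ShortSet L {ν}) (hI : I.Nonempty)
    (hIν : I ⊂ univ.erase ν) : IsVertex L (I, univ.erase ν \ I, {ν}) := by
  obtain ⟨i, hi, hiI⟩ := exists_of_ssubset hIν
  refine ⟨hI, ⟨i, mem_sdiff.2 ⟨hi, hiI⟩⟩, singleton_nonempty ν,
    shortSet_of_ssubset_erase hL hbow hIν,
    shortSet_of_ssubset_erase hL hbow (sdiff_ssubset hIν.subset hI), hν,
    disjoint_sdiff, ?_, ?_, ?_⟩
  · exact disjoint_singleton_right.2 fun h => notMem_erase ν univ (hIν.subset h)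
  · exact disjoint_singleton_right.2 fun h => notMem_erase ν univ (mem_sdiff.1 h).1
  · rw [union_sdiff_of_subset hIν.subset, union_singleton, insert_erase (mem_univ ν)]

theorem IsVertex.exists_cyclEq_of_ssubset_erase {V : LTriple n} (hV : IsVertex L V) :
    ∃ I : Finset (Fin n), I.Nonempty ∧ I ⊂ univ.erase ν ∧
      CyclEq V (I, univ.erase ν \ I, {ν}) := by
  obtain ⟨⟨A, B, C⟩, hVW, hνC⟩ := exists_cyclEq_mem_third hV.2.2.2.2.2.2.2.2.2 ν
  have hW := hVW.isVertex_iff.1 hV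
  obtain rfl := eq_singleton_of_shortSet_of_mem hL hbow hW.2.2.2.2.2.1 hνC
  obtain ⟨hA, rfl⟩ := hW.ssubset_erase_of_third_eq_singleton
  exact ⟨A, hW.1, hA, hVW⟩

end Bow

/-- If `L` is an `n`-bow, then the vertices of `Γ(L)` are exactly the
cyclic triples `(I, [n−1]∖I, {n})` for `I` a nonempty proper subset of `[n−1]`, and
distinct such subsets `I` give distinct vertices. -/
theorem bow_vertices_description (n : ℕ) (hn : 3 ≤ n) (L : Fin n → ℝ)
    (hpos : ∀ i, 0 < L i) (htri : TriangleIneq L)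
    (hbow : ∀ i : Fin n, i ≠ ⟨n - 1, by omega⟩ → LongSet L {i, ⟨n - 1, by omega⟩}) :
    (∀ V : LTriple n, IsVertex L V ↔
      ∃ I : Finset (Fin n), I.Nonempty ∧ I ⊂ Finset.univ.erase ⟨n - 1, by omega⟩ ∧
        CyclEq V (I, (Finset.univ.erase ⟨n - 1, by omega⟩) \ I, {⟨n - 1, by omega⟩})) ∧
    (∀ I I' : Finset (Fin n),
      I.Nonempty → I ⊂ Finset.univ.erase ⟨n - 1, by omega⟩ →
      I'.Nonempty → I' ⊂ Finset.univ.erase ⟨n - 1, by omega⟩ →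
      CyclEq ((I, (Finset.univ.erase ⟨n - 1, by omega⟩) \ I,
          ({⟨n - 1, by omega⟩} : Finset (Fin n))) : LTriple n)
        ((I', (Finset.univ.erase ⟨n - 1, by omega⟩) \ I',
          ({⟨n - 1, by omega⟩} : Finset (Fin n))) : LTriple n) → I = I') := by
  have hL : ∀ i, 0 ≤ L i := fun i => (hpos i).le
  refine ⟨fun V => ⟨fun hV => hV.exists_cyclEq_of_ssubset_erase hL hbow, ?_⟩, ?_⟩
  · rintro ⟨I, hI, hIν, hV⟩
    exact hV.isVertex_iff.2 (isVertex_of_ssubset_erase hL hbow (htri _) hI hIν)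
  · exact fun I I' _ _ _ hI' h => eq_of_cyclEq_of_subset_erase hI'.subset h
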